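/- Let G be a group of order 16 whose center Z(G) has order 2. Then the quotient group G/Z(G) is isomorphic to the dihedral group D₄ of order 8 (in particular, G/Z(G) is isomorphic neither to Z/4Z × Z/2Z, nor to (Z/2Z)³, nor to the quaternion group Q₈, nor to a cyclic group). -/
import Mathlib

open Subgroup QuotientGroup


section Helpers
variable {G : Type*} [Group G]

private lemma aux_comm_cancel {u a c : G}
    (hu : ∀ g : G, g * u = u * g) (h : a * (u * c) = (u * c) * a) : a * c = c * a := by
  have h1 : u * (a * c) = u * (c * a) := by
    calc u * (a * c) = (a * u) * c := by rw [hu a]; group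
    _ = a * (u * c) := by group
    _ = (u * c) * a := h
    _ = u * (c * a) := by group
  exact mul_left_cancel h1

private lemma aux_comm_transfer {x w a : G}
    (hu : ∀ g : G, g * (x * w⁻¹) = (x * w⁻¹) * g)
    (h : a * x = x * a) : a * w = w * a := by
  apply aux_comm_cancel hu
  have hx : x = (x * w⁻¹) * w := by group
  rw [← hx]
  exact h

private lemma aux_sup_center_eq_top' (S : Set G)
    (hS : Subgroup.closure ((QuotientGroup.mk' (Subgroup.center G)) '' S) = ⊤) :
    Subgroup.closure S ⊔ Subgroup.center G = ⊤ := by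
  have h1 : Subgroup.map (QuotientGroup.mk' (Subgroup.center G))
      (Subgroup.closure S ⊔ Subgroup.center G) = ⊤ := by
    refine top_unique ?_
    rw [← hS, ← MonoidHom.map_closure]
    exact Subgroup.map_mono le_sup_left
  have h2 := Subgroup.comap_map_eq (f := QuotientGroup.mk' (Subgroup.center G))
      (Subgroup.closure S ⊔ Subgroup.center G)
  rw [h1, Subgroup.comap_top, QuotientGroup.ker_mk', sup_assoc, sup_idem] at h2
  exact h2.symm

private lemma aux_mem_center' (S : Set G)
    (hS : Subgroup.closure ((QuotientGroup.mk' (Subgroup.center G)) '' S) = ⊤)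
    {c : G} (hc : ∀ x ∈ S, c * x = x * c) : c ∈ Subgroup.center G := by
  have htop := aux_sup_center_eq_top' S hS
  have hle : Subgroup.closure S ⊔ Subgroup.center G ≤ Subgroup.centralizer {c} := by
    refine sup_le ((Subgroup.closure_le _).2 ?_) (Subgroup.center_le_centralizer _)
    intro x hx
    rw [SetLike.mem_coe, Subgroup.mem_centralizer_singleton_iff]
    exact (hc x hx).symm
  rw [Subgroup.mem_center_iff]
  intro g
  have hg : g ∈ Subgroup.centralizer {c} := hle (htop ▸ Subgroup.mem_top g)
  exact Subgroup.mem_centralizer_singleton_iff.1 hg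

end Helpers

private lemma aux_exp_two (G : Type*) [Group G]
    (h16 : Nat.card G = 16) (hZ : Nat.card (Subgroup.center G) = 2)
    (hexp : ∀ q : G ⧸ Subgroup.center G, q * q = 1) : False := by
  have hfin : Finite G := Nat.finite_of_card_ne_zero (by rw [h16]; norm_num)
  have hQ8 : Nat.card (G ⧸ Subgroup.center G) = 8 := by
    have h := Subgroup.card_eq_card_quotient_mul_card_subgroup (Subgroup.center G)
    rw [h16, hZ] at h
    omega
  -- commutativity of the quotient
  have hQinv : ∀ q : G ⧸ Subgroup.center G, q⁻¹ = q := fun q => by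
    rw [inv_eq_iff_mul_eq_one]; exact hexp q
  have hQcomm : ∀ a b : G ⧸ Subgroup.center G, a * b = b * a := by
    intro a b
    calc a * b = (a * b)⁻¹ := (hQinv _).symm
    _ = b⁻¹ * a⁻¹ := by rw [mul_inv_rev]
    _ = b * a := by rw [hQinv, hQinv]
  have hcommZ : ∀ a b : G, a * b * a⁻¹ * b⁻¹ ∈ Subgroup.center G := by
    intro a b
    have h1 : (QuotientGroup.mk' (Subgroup.center G)) (a * b * a⁻¹ * b⁻¹) = 1 := by
      rw [map_mul, map_mul, map_mul, map_inv, map_inv,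
        hQcomm ((QuotientGroup.mk' (Subgroup.center G)) a)
          ((QuotientGroup.mk' (Subgroup.center G)) b)]
      group
    rwa [← QuotientGroup.ker_mk' (Subgroup.center G), MonoidHom.mem_ker]
  -- a noncentral element and a partner
  have hneT : Subgroup.center G ≠ ⊤ := by
    intro h
    rw [h, Nat.card_congr Subgroup.topEquiv.toEquiv, h16] at hZ
    omega
  obtain ⟨x0, hx0⟩ : ∃ x, x ∉ Subgroup.center G := by
    by_contra h
    push_neg at h
    exact hneT ((Subgroup.eq_top_iff' (Subgroup.center G)).2 h)
  obtain ⟨x1, hx1x0⟩ : ∃ g, ¬ g * x0 = x0 * g := by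
    by_contra h
    push_neg at h
    exact hx0 (Subgroup.mem_center_iff.2 h)
  have hne10 : ¬ x0 * x1 = x1 * x0 := fun h => hx1x0 h.symm
  -- commutator homomorphisms
  have mkhom : ∀ a : G, ∃ ψ : G →* Subgroup.center G,
      ∀ g, (ψ g : G) = a * g * a⁻¹ * g⁻¹ := by
    intro a
    refine ⟨MonoidHom.mk' (fun g => ⟨a * g * a⁻¹ * g⁻¹, hcommZ a g⟩) ?_, fun g => rfl⟩
    intro g h
    apply Subtype.ext
    show a * (g * h) * a⁻¹ * (g * h)⁻¹ = (a * g * a⁻¹ * g⁻¹) * (a * h * a⁻¹ * h⁻¹)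
    have key : a * (g * h) * a⁻¹ * (g * h)⁻¹
        = (a * g * a⁻¹ * g⁻¹) * (g * (a * h * a⁻¹ * h⁻¹) * g⁻¹) := by group
    rw [key, Subgroup.mem_center_iff.1 (hcommZ a h) g]
    group
  obtain ⟨ψ0, hψ0⟩ := mkhom x0
  obtain ⟨ψ1, hψ1⟩ := mkhom x1
  set ψ : G →* Subgroup.center G × Subgroup.center G := ψ0.prod ψ1 with hψdef
  have hkercard : 4 ≤ Nat.card ψ.ker := by
    have h1 := Subgroup.card_eq_card_quotient_mul_card_subgroup ψ.ker
    have h2 : Nat.card (G ⧸ ψ.ker) = Nat.card ψ.range :=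
      Nat.card_congr (QuotientGroup.quotientKerEquivRange ψ).toEquiv
    have h3 : Nat.card ψ.range ∣ Nat.card (Subgroup.center G × Subgroup.center G) :=
      Subgroup.card_subgroup_dvd_card _
    have h4 : Nat.card (Subgroup.center G × Subgroup.center G) = 4 := by
      rw [Nat.card_prod, hZ]
    have h5 : Nat.card ψ.range ≤ 4 := Nat.le_of_dvd (by norm_num) (h4 ▸ h3)
    rw [h16, h2] at h1
    have h6 := Nat.mul_le_mul_right (Nat.card ψ.ker) h5
    omega
  have hnotle : ¬ ψ.ker ≤ Subgroup.center G := by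
    intro hle
    have := Subgroup.card_le_of_le hle
    omega
  obtain ⟨x2, hx2ker, hx2Z⟩ := SetLike.not_le_iff_exists.1 hnotle
  have hx2k : ψ0 x2 = 1 ∧ ψ1 x2 = 1 := by
    have h := hx2ker
    rw [MonoidHom.mem_ker, hψdef, MonoidHom.prod_apply, Prod.mk_eq_one] at h
    exact h
  have hcomm0 : x0 * x2 = x2 * x0 := by
    have e : x0 * x2 * x0⁻¹ * x2⁻¹ = 1 := by
      rw [← hψ0 x2, hx2k.1]
      rfl
    have e1 := mul_inv_eq_one.1 e
    exact mul_inv_eq_iff_eq_mul.1 e1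
  have hcomm1 : x1 * x2 = x2 * x1 := by
    have e : x1 * x2 * x1⁻¹ * x2⁻¹ = 1 := by
      rw [← hψ1 x2, hx2k.2]
      rfl
    have e1 := mul_inv_eq_one.1 e
    exact mul_inv_eq_iff_eq_mul.1 e1
  -- pass to the quotient
  have hmkeq : ∀ a b : G,
      (QuotientGroup.mk' (Subgroup.center G)) a = (QuotientGroup.mk' (Subgroup.center G)) b →
      ∀ g : G, g * (a * b⁻¹) = (a * b⁻¹) * g := by
    intro a b h
    have hmem : a * b⁻¹ ∈ Subgroup.center G := by
      rw [← QuotientGroup.ker_mk' (Subgroup.center G), MonoidHom.mem_ker, map_mul, map_inv, h]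
      group
    exact Subgroup.mem_center_iff.1 hmem
  set e0 := (QuotientGroup.mk' (Subgroup.center G)) x0 with he0def
  set e1 := (QuotientGroup.mk' (Subgroup.center G)) x1 with he1def
  set e2 := (QuotientGroup.mk' (Subgroup.center G)) x2 with he2def
  have hmem_iff : ∀ a : G,
      (QuotientGroup.mk' (Subgroup.center G)) a = 1 ↔ a ∈ Subgroup.center G := by
    intro a
    rw [QuotientGroup.mk'_apply]
    exact QuotientGroup.eq_one_iff a
  -- distinctness
  have n0 : e0 ≠ 1 := fun h => hx0 ((hmem_iff x0).1 h)
  have n1 : e1 ≠ 1 := by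
    intro h
    have := Subgroup.mem_center_iff.1 ((hmem_iff x1).1 h) x0
    exact hne10 this
  have n01 : e0 ≠ e1 := by
    intro h
    have hu := hmkeq x0 x1 h
    have : x0 * x1 = x1 * x0 := aux_comm_transfer hu rfl
    exact hne10 this
  have n010 : e0 * e1 ≠ 1 := by
    intro h
    have hmem : x0 * x1 ∈ Subgroup.center G := by
      rw [← hmem_iff, map_mul]
      exact h
    have hc := Subgroup.mem_center_iff.1 hmem x0
    have hc' : x0 * (x0 * x1) = x0 * (x1 * x0) := by rw [hc]; group
    exact hne10 (mul_left_cancel hc')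
  have n011 : e0 * e1 ≠ e0 := by
    intro h
    exact n1 (mul_left_cancel (h.trans (mul_one e0).symm))
  have n012 : e0 * e1 ≠ e1 := by
    intro h
    exact n0 (mul_right_cancel (h.trans (one_mul e1).symm))
  have n2 : e2 ≠ 1 := fun h => hx2Z ((hmem_iff x2).1 h)
  have n20 : e2 ≠ e0 := by
    intro h
    have hu := hmkeq x2 x0 h
    have : x1 * x0 = x0 * x1 := aux_comm_transfer hu hcomm1
    exact hne10 this.symm
  have n21 : e2 ≠ e1 := by
    intro h
    have hu := hmkeq x2 x1 h
    have : x0 * x1 = x1 * x0 := aux_comm_transfer hu hcomm0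
    exact hne10 this
  have n201 : e2 ≠ e0 * e1 := by
    intro h
    have h' : (QuotientGroup.mk' (Subgroup.center G)) x2
        = (QuotientGroup.mk' (Subgroup.center G)) (x0 * x1) := by
      rw [map_mul]
      exact h
    have hu := hmkeq x2 (x0 * x1) h'
    have hres : x0 * (x0 * x1) = (x0 * x1) * x0 := aux_comm_transfer hu hcomm0
    have hc' : x0 * (x0 * x1) = x0 * (x1 * x0) := by rw [hres]; group
    exact hne10 (mul_left_cancel hc')
  -- the subgroup generated by e0, e1, e2 is everything
  set P := Subgroup.closure ({e0, e1, e2} : Set (G ⧸ Subgroup.center G)) with hPdef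
  have hsubT : ({1, e0, e1, e0 * e1, e2} : Set (G ⧸ Subgroup.center G))
      ⊆ (P : Set (G ⧸ Subgroup.center G)) := by
    intro q hq
    have hm0 : e0 ∈ P := Subgroup.subset_closure (by simp)
    have hm1 : e1 ∈ P := Subgroup.subset_closure (by simp)
    have hm2 : e2 ∈ P := Subgroup.subset_closure (by simp)
    simp only [Set.mem_insert_iff, Set.mem_singleton_iff] at hq
    rcases hq with rfl | rfl | rfl | rfl | rfl
    · exact P.one_mem
    · exact hm0
    · exact hm1
    · exact P.mul_mem hm0 hm1
    · exact hm2
  have hT5 : ({1, e0, e1, e0 * e1, e2} : Set (G ⧸ Subgroup.center G)).ncard = 5 := by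
    rw [Set.ncard_insert_of_notMem (by
      intro h
      simp only [Set.mem_insert_iff, Set.mem_singleton_iff] at h
      rcases h with h | h | h | h
      exacts [n0 h.symm, n1 h.symm, n010 h.symm, n2 h.symm])]
    rw [Set.ncard_insert_of_notMem (by
      intro h
      simp only [Set.mem_insert_iff, Set.mem_singleton_iff] at h
      rcases h with h | h | h
      exacts [n01 h, n011 h.symm, n20 h.symm])]
    rw [Set.ncard_insert_of_notMem (by
      intro h
      simp only [Set.mem_insert_iff, Set.mem_singleton_iff] at h
      rcases h with h | h
      exacts [n012 h.symm, n21 h.symm])]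
    rw [Set.ncard_insert_of_notMem (by
      intro h
      simp only [Set.mem_singleton_iff] at h
      exact n201 h.symm)]
    rw [Set.ncard_singleton]
  have hcardP : Nat.card P = 8 := by
    have hd : Nat.card P ∣ 8 := hQ8 ▸ Subgroup.card_subgroup_dvd_card P
    have h5 : 5 ≤ Nat.card P := by
      calc 5 = ({1, e0, e1, e0 * e1, e2} : Set (G ⧸ Subgroup.center G)).ncard := hT5.symm
      _ ≤ (P : Set (G ⧸ Subgroup.center G)).ncard :=
          Set.ncard_le_ncard hsubT (Set.toFinite _)
      _ = Nat.card P := (Nat.card_coe_set_eq _).symm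
    have hle := Nat.le_of_dvd (by norm_num) hd
    interval_cases h : Nat.card ↥P <;> omega
  have hPtop : P = ⊤ := Subgroup.eq_top_of_card_eq _ (by rw [hcardP, hQ8])
  -- conclude x2 is central, a contradiction
  apply hx2Z
  apply aux_mem_center' ({x0, x1, x2} : Set G)
  · have himg : (QuotientGroup.mk' (Subgroup.center G)) '' {x0, x1, x2} = {e0, e1, e2} := by
      rw [Set.image_insert_eq, Set.image_insert_eq, Set.image_singleton,
        ← he0def, ← he1def, ← he2def]
    rw [himg, ← hPdef, hPtop]
  · intro x hx
    simp only [Set.mem_insert_iff, Set.mem_singleton_iff] at hx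
    rcases hx with rfl | rfl | rfl
    · exact hcomm0.symm
    · exact hcomm1.symm
    · rfl



section Count
variable {Q : Type*} [Group Q] [Finite Q]

private lemma aux_closure_rs_top (hQ8 : Nat.card Q = 8)
    {r s : Q} (hr : orderOf r = 4) (hs : s ∉ Subgroup.zpowers r) :
    Subgroup.closure {r, s} = ⊤ := by
  have h1 : Subgroup.zpowers r ≤ Subgroup.closure {r, s} := by
    rw [Subgroup.zpowers_eq_closure]
    exact Subgroup.closure_mono (by simp)
  have hcard4 : Nat.card (Subgroup.zpowers r) = 4 := by
    rw [Nat.card_zpowers, hr]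
  have hdvd1 : (4 : ℕ) ∣ Nat.card (Subgroup.closure {r, s}) :=
    hcard4 ▸ Subgroup.card_dvd_of_le h1
  have hdvd2 : Nat.card (Subgroup.closure {r, s}) ∣ 8 :=
    hQ8 ▸ Subgroup.card_subgroup_dvd_card _
  have hcases : Nat.card (Subgroup.closure {r, s}) = 4 ∨
      Nat.card (Subgroup.closure {r, s}) = 8 := by
    have hle := Nat.le_of_dvd (by norm_num) hdvd2
    have hge := Nat.le_of_dvd (by
      have : Nat.card (Subgroup.closure ({r, s} : Set Q)) ≠ 0 := Nat.card_pos.ne'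
      omega) hdvd1
    interval_cases h : (Nat.card (Subgroup.closure ({r, s} : Set Q))) <;> omega
  rcases hcases with h | h
  · exfalso
    have heq : Subgroup.zpowers r = Subgroup.closure {r, s} :=
      Subgroup.eq_of_le_of_card_ge h1 (by omega)
    exact hs (heq ▸ Subgroup.subset_closure (by simp))
  · exact Subgroup.eq_top_of_card_eq _ (by rw [h, hQ8])

private lemma aux_dihedral (hQ8 : Nat.card Q = 8) {r s : Q}
    (hr : orderOf r = 4) (hs : s ∉ Subgroup.zpowers r)
    (hs2 : s * s = 1) (hsr : s * r * s⁻¹ = r⁻¹) :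
    Nonempty (Q ≃* DihedralGroup 4) := by
  have hr4 : r ^ 4 = 1 := by rw [← hr]; exact pow_orderOf_eq_one r
  have hrs : r * s = s * r⁻¹ := by
    have : r = s⁻¹ * r⁻¹ * s := by rw [← hsr]; group
    calc r * s = (s⁻¹ * r⁻¹ * s) * s := by rw [← this]
    _ = s⁻¹ * r⁻¹ * (s * s) := by group
    _ = s⁻¹ * r⁻¹ := by rw [hs2, mul_one]
    _ = s * r⁻¹ := by
        have hsinv : s⁻¹ = s := by
          rw [inv_eq_iff_mul_eq_one, hs2]
        rw [hsinv]
  have hsinv : s⁻¹ = s := by rw [inv_eq_iff_mul_eq_one, hs2]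
  -- powers of r move past s
  have hpow : ∀ n : ℕ, r ^ n * s = s * (r ^ n)⁻¹ := by
    intro n
    induction n with
    | zero => simp
    | succ k ih =>
      calc r ^ (k + 1) * s = r ^ k * (r * s) := by rw [pow_succ]; group
      _ = r ^ k * s * r⁻¹ := by rw [hrs]; group
      _ = s * (r ^ k)⁻¹ * r⁻¹ := by rw [ih]
      _ = s * (r ^ (k + 1))⁻¹ := by rw [pow_succ]; group
  -- the power map from ZMod 4
  set φ : ZMod 4 → Q := fun i => r ^ i.val with hφ
  have hφadd : ∀ i j : ZMod 4, φ (i + j) = φ i * φ j := by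
    intro i j
    show r ^ (i + j).val = r ^ i.val * r ^ j.val
    have hmod := pow_mod_orderOf r (i.val + j.val)
    rw [hr] at hmod
    rw [ZMod.val_add, ← pow_add]
    exact hmod
  have hφone : φ 1 = r := by
    show r ^ (1 : ZMod 4).val = r
    rw [show (1 : ZMod 4).val = 1 from rfl, pow_one]
  have hφzero : φ 0 = 1 := by
    show r ^ (0 : ZMod 4).val = 1
    simp
  have hφsub : ∀ i j : ZMod 4, (φ i)⁻¹ * φ j = φ (j - i) := by
    intro i j
    have : φ j = φ i * φ (j - i) := by rw [← hφadd]; ring_nf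
    rw [this]; group
  have hφs : ∀ i : ZMod 4, φ i * s = s * (φ i)⁻¹ := fun i => hpow i.val
  -- the homomorphism
  set f : DihedralGroup 4 → Q := fun d =>
    match d with
    | DihedralGroup.r i => φ i
    | DihedralGroup.sr i => s * φ i with hf
  have hmul : ∀ a b : DihedralGroup 4, f (a * b) = f a * f b := by
    rintro (i | i) (j | j)
    · show φ (i + j) = φ i * φ j
      exact hφadd i j
    · show s * φ (j - i) = φ i * (s * φ j)
      rw [← hφsub i j, show φ i * (s * φ j) = (φ i * s) * φ j by group, hφs i]; group
    · show s * φ (i + j) = s * φ i * φ j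
      rw [hφadd]; group
    · show φ (j - i) = s * φ i * (s * φ j)
      rw [← hφsub i j]
      calc (φ i)⁻¹ * φ j = s * (s * (φ i)⁻¹) * φ j := by
            rw [← mul_assoc, hs2, one_mul]
      _ = s * (φ i * s) * φ j := by rw [hφs]
      _ = s * φ i * (s * φ j) := by group
  set F : DihedralGroup 4 →* Q := MonoidHom.mk' f hmul with hF
  have hsurj : Function.Surjective F := by
    rw [← MonoidHom.range_eq_top]
    have hrin : r ∈ F.range := ⟨DihedralGroup.r 1, hφone⟩
    have hsin : s ∈ F.range := ⟨DihedralGroup.sr 0, by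
      show s * φ 0 = s
      rw [hφzero, mul_one]⟩
    have htop := aux_closure_rs_top hQ8 hr hs
    apply top_unique
    rw [← htop]
    refine (Subgroup.closure_le _).2 ?_
    intro x hx
    rcases hx with h | h
    · exact h ▸ hrin
    · simp only [Set.mem_singleton_iff] at h
      exact h ▸ hsin
  have hcard : Nat.card (DihedralGroup 4) = Nat.card Q := by
    rw [hQ8, Nat.card_eq_fintype_card, DihedralGroup.card]
  have hbij : Function.Bijective F :=
    (Nat.bijective_iff_surjective_and_card F).2 ⟨hsurj, hcard⟩
  exact ⟨(MulEquiv.ofBijective F hbij).symm⟩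

end Count

section A
variable {G : Type*} [Group G]

private lemma aux_center_sq (hZ : Nat.card (Subgroup.center G) = 2)
    {u : G} (hu : u ∈ Subgroup.center G) : u * u = 1 := by
  have h : (⟨u, hu⟩ : Subgroup.center G) ^ 2 = 1 := by
    rw [← hZ]; exact pow_card_eq_one'
  have := congrArg Subtype.val h
  simpa [pow_two] using this

end A

private lemma aux_lift_contradiction (G : Type*) [Group G]
    (hZ : Nat.card (Subgroup.center G) = 2)
    {r s : G ⧸ Subgroup.center G}
    (hclos : Subgroup.closure ({r, s} : Set (G ⧸ Subgroup.center G)) = ⊤)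
    (hcase : (s * r * s⁻¹ = r) ∨ (s * r * s⁻¹ = r⁻¹ ∧ s * s = r * r)) :
    r * r = 1 := by
  obtain ⟨x, hx⟩ := QuotientGroup.mk'_surjective (Subgroup.center G) r
  obtain ⟨y, hy⟩ := QuotientGroup.mk'_surjective (Subgroup.center G) s
  have hmem1 : ∀ a : G,
      (QuotientGroup.mk' (Subgroup.center G)) a = 1 → a ∈ Subgroup.center G := by
    intro a h
    rw [QuotientGroup.mk'_apply] at h
    exact (QuotientGroup.eq_one_iff a).1 h
  have hcomm : (x * x) * y = y * (x * x) := by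
    rcases hcase with hc | ⟨hc1, hc2⟩
    · have hd : y * x * y⁻¹ * x⁻¹ ∈ Subgroup.center G := by
        apply hmem1
        rw [map_mul, map_mul, map_mul, map_inv, map_inv, hx, hy, hc]
        group
      have hdc := Subgroup.mem_center_iff.1 hd
      have hd2 : (y * x * y⁻¹ * x⁻¹) * (y * x * y⁻¹ * x⁻¹) = 1 := aux_center_sq hZ hd
      have hyx : y * x = (y * x * y⁻¹ * x⁻¹) * (x * y) := by group
      have hres : y * (x * x) = (x * x) * y := by
        calc y * (x * x) = (y * x) * x := by group
        _ = ((y * x * y⁻¹ * x⁻¹) * (x * y)) * x := by rw [← hyx]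
        _ = (y * x * y⁻¹ * x⁻¹) * (x * (y * x)) := by group
        _ = (y * x * y⁻¹ * x⁻¹) * (x * ((y * x * y⁻¹ * x⁻¹) * (x * y))) := by rw [← hyx]
        _ = (y * x * y⁻¹ * x⁻¹) * ((x * (y * x * y⁻¹ * x⁻¹)) * (x * y)) := by group
        _ = (y * x * y⁻¹ * x⁻¹) * (((y * x * y⁻¹ * x⁻¹) * x) * (x * y)) := by
              rw [hdc x]
        _ = ((y * x * y⁻¹ * x⁻¹) * (y * x * y⁻¹ * x⁻¹)) * (x * x * y) := by group
        _ = x * x * y := by rw [hd2, one_mul]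
      exact hres.symm
    · have hcmem : y * x * y⁻¹ * x ∈ Subgroup.center G := by
        apply hmem1
        rw [map_mul, map_mul, map_mul, map_inv, hx, hy, hc1]
        group
      have hwmem : (y * y) * (x * x)⁻¹ ∈ Subgroup.center G := by
        apply hmem1
        rw [map_mul, map_inv, map_mul, map_mul, hx, hy, hc2]
        group
      have hcc := Subgroup.mem_center_iff.1 hcmem
      have hwc := Subgroup.mem_center_iff.1 hwmem
      have hc2' : (y * x * y⁻¹ * x) * (y * x * y⁻¹ * x) = 1 := aux_center_sq hZ hcmem
      have hyxy : y * x * y⁻¹ = (y * x * y⁻¹ * x) * x⁻¹ := by group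
      have hy2 : y * y = ((y * y) * (x * x)⁻¹) * (x * x) := by group
      have e2 : y * (x * x) * y⁻¹ = x⁻¹ * x⁻¹ := by
        calc y * (x * x) * y⁻¹ = (y * x * y⁻¹) * (y * x * y⁻¹) := by group
        _ = ((y * x * y⁻¹ * x) * x⁻¹) * ((y * x * y⁻¹ * x) * x⁻¹) := by rw [← hyxy]
        _ = (y * x * y⁻¹ * x) * ((x⁻¹ * (y * x * y⁻¹ * x)) * x⁻¹) := by group
        _ = (y * x * y⁻¹ * x) * (((y * x * y⁻¹ * x) * x⁻¹) * x⁻¹) := by rw [hcc x⁻¹]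
        _ = ((y * x * y⁻¹ * x) * (y * x * y⁻¹ * x)) * (x⁻¹ * x⁻¹) := by group
        _ = x⁻¹ * x⁻¹ := by rw [hc2', one_mul]
      have e4 : ((y * y) * (x * x)⁻¹) * (x * x) = ((y * y) * (x * x)⁻¹) * (x⁻¹ * x⁻¹) := by
        calc ((y * y) * (x * x)⁻¹) * (x * x) = y * y := by group
        _ = y * (y * y) * y⁻¹ := by group
        _ = y * (((y * y) * (x * x)⁻¹) * (x * x)) * y⁻¹ := by rw [← hy2]
        _ = (y * ((y * y) * (x * x)⁻¹)) * ((x * x) * y⁻¹) := by group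
        _ = (((y * y) * (x * x)⁻¹) * y) * ((x * x) * y⁻¹) := by rw [hwc y]
        _ = ((y * y) * (x * x)⁻¹) * (y * (x * x) * y⁻¹) := by group
        _ = ((y * y) * (x * x)⁻¹) * (x⁻¹ * x⁻¹) := by rw [e2]
      have hxx : x * x = x⁻¹ * x⁻¹ := mul_left_cancel e4
      have hres : y * (x * x) = (x * x) * y := by
        calc y * (x * x) = (y * (x * x) * y⁻¹) * y := by group
        _ = (x⁻¹ * x⁻¹) * y := by rw [e2]
        _ = (x * x) * y := by rw [← hxx]
      exact hres.symm
  have hxxZ : x * x ∈ Subgroup.center G := by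
    apply aux_mem_center' ({x, y} : Set G)
    · rw [Set.image_insert_eq, Set.image_singleton, hx, hy, hclos]
    · intro a ha
      simp only [Set.mem_insert_iff, Set.mem_singleton_iff] at ha
      rcases ha with rfl | rfl
      · group
      · exact hcomm
  have hone : (QuotientGroup.mk' (Subgroup.center G)) (x * x) = 1 := by
    rw [QuotientGroup.mk'_apply]
    exact (QuotientGroup.eq_one_iff _).2 hxxZ
  rw [map_mul, hx] at hone
  exact hone


/-- A group of order 16 with center of order 2 has central quotient isomorphic
to the dihedral group `D₄` of order 8. -/
theorem quotient_center_dihedral_of_order_sixteen (G : Type*) [Group G]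
    (h16 : Nat.card G = 16) (hZ : Nat.card (Subgroup.center G) = 2) :
    Nonempty ((G ⧸ Subgroup.center G) ≃* DihedralGroup 4) := by
  have hfin : Finite G := Nat.finite_of_card_ne_zero (by rw [h16]; norm_num)
  have hQ8 : Nat.card (G ⧸ Subgroup.center G) = 8 := by
    have h := Subgroup.card_eq_card_quotient_mul_card_subgroup (Subgroup.center G)
    rw [h16, hZ] at h
    omega
  have hQfin : Finite (G ⧸ Subgroup.center G) :=
    Nat.finite_of_card_ne_zero (by rw [hQ8]; norm_num)
  -- no element of order 8
  have hno8 : ∀ q : G ⧸ Subgroup.center G, orderOf q ≠ 8 := by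
    intro q hq
    have htop : Subgroup.zpowers q = ⊤ :=
      Subgroup.eq_top_of_card_eq _ (by rw [Nat.card_zpowers, hq, hQ8])
    have hcyc : IsCyclic (G ⧸ Subgroup.center G) :=
      ⟨⟨q, fun x => by
        have hx : x ∈ (⊤ : Subgroup (G ⧸ Subgroup.center G)) := trivial
        rw [← htop] at hx
        exact hx⟩⟩
    have hcomm := commutative_of_cyclic_center_quotient
      (QuotientGroup.mk' (Subgroup.center G)) (le_of_eq (QuotientGroup.ker_mk' _))
    have hcT : Subgroup.center G = ⊤ := (Subgroup.eq_top_iff' _).2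
      (fun g => Subgroup.mem_center_iff.2 (fun h => hcomm h g))
    rw [hcT, Nat.card_congr Subgroup.topEquiv.toEquiv, h16] at hZ
    omega
  -- there is an element of order 4
  obtain ⟨r, hr4⟩ : ∃ r : G ⧸ Subgroup.center G, orderOf r = 4 := by
    by_contra hcon
    push_neg at hcon
    apply aux_exp_two G h16 hZ
    intro q
    have hd : orderOf q ∣ 8 := hQ8 ▸ orderOf_dvd_natCard q
    have h8 := hno8 q
    have h4 := hcon q
    have h2 : orderOf q ∣ 2 := by
      have hle := Nat.le_of_dvd (by norm_num) hd
      interval_cases hh : orderOf q <;> omega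
    have := orderOf_dvd_iff_pow_eq_one.1 h2
    rwa [pow_two] at this
  have hr4one : r ^ 4 = 1 := by rw [← hr4]; exact pow_orderOf_eq_one r
  have hr2ne : r * r ≠ 1 := by
    intro h
    have hdvd : orderOf r ∣ 2 := orderOf_dvd_iff_pow_eq_one.2 (by rw [pow_two]; exact h)
    rw [hr4] at hdvd
    omega
  obtain ⟨s, hs⟩ : ∃ s, s ∉ Subgroup.zpowers r := by
    by_contra h
    push_neg at h
    have htop : Subgroup.zpowers r = ⊤ := (Subgroup.eq_top_iff' _).2 h
    have hc := Nat.card_zpowers r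
    rw [htop, Nat.card_congr Subgroup.topEquiv.toEquiv, hQ8, hr4] at hc
    omega
  have hclos : Subgroup.closure ({r, s} : Set (G ⧸ Subgroup.center G)) = ⊤ :=
    aux_closure_rs_top hQ8 hr4 hs
  have hindex : (Subgroup.zpowers r).index = 2 := by
    have h := Subgroup.card_mul_index (Subgroup.zpowers r)
    rw [Nat.card_zpowers, hr4, hQ8] at h
    omega
  have hsrs : s * r * s⁻¹ ∈ Subgroup.zpowers r := by
    have hsr : s * r ∉ Subgroup.zpowers r := by
      intro h
      rw [Subgroup.mul_mem_iff_of_index_two hindex] at h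
      exact hs (h.2 (Subgroup.mem_zpowers r))
    rw [Subgroup.mul_mem_iff_of_index_two hindex]
    exact iff_of_false hsr (fun h => hs (by simpa using h))
  have hss : s * s ∈ Subgroup.zpowers r := by
    have := Subgroup.mul_self_mem_of_index_two hindex s
    exact this
  -- reduce a zpowers membership to a small natural power
  have hreduce : ∀ t : G ⧸ Subgroup.center G, t ∈ Subgroup.zpowers r →
      ∃ m : ℕ, m < 4 ∧ r ^ m = t := by
    intro t ht
    obtain ⟨k, hk⟩ := Subgroup.mem_zpowers_iff.1 ht
    refine ⟨(k % 4).toNat, ?_, ?_⟩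
    · have := Int.emod_lt_of_pos k (by norm_num : (0:ℤ) < 4)
      have := Int.emod_nonneg k (by norm_num : (4:ℤ) ≠ 0)
      omega
    · have h1 : r ^ (k % (4:ℤ)) = r ^ k := by
        have h := zpow_mod_orderOf r k
        rwa [hr4] at h
      have h2 : ((k % 4).toNat : ℤ) = k % 4 :=
        Int.toNat_of_nonneg (Int.emod_nonneg k (by norm_num))
      rw [← zpow_natCast, h2, h1, hk]
  obtain ⟨m, hmlt, hm⟩ := hreduce _ hsrs
  interval_cases m
  · -- s * r * s⁻¹ = 1, impossible
    exfalso
    have h1 : s * r * s⁻¹ = 1 := by rw [← hm, pow_zero]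
    have h2 : r = 1 := by
      calc r = s⁻¹ * (s * r * s⁻¹) * s := by group
      _ = s⁻¹ * 1 * s := by rw [h1]
      _ = 1 := by group
    exact hr2ne (by rw [h2, one_mul])
  · -- s * r * s⁻¹ = r : quotient would be abelian
    exfalso
    have h1 : s * r * s⁻¹ = r := by rw [← hm, pow_one]
    exact hr2ne (aux_lift_contradiction G hZ hclos (Or.inl h1))
  · -- s * r * s⁻¹ = r ^ 2, impossible
    exfalso
    have h1 : s * r * s⁻¹ = r * r := by rw [← hm, pow_two]
    have h2 : s * (r * r) * s⁻¹ = (r * r) * (r * r) := by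
      calc s * (r * r) * s⁻¹ = (s * r * s⁻¹) * (s * r * s⁻¹) := by group
      _ = (r * r) * (r * r) := by rw [h1]
    have h3 : (r * r) * (r * r) = 1 := by
      have h5 : (r * r) * (r * r) = r ^ 4 := by
        rw [show (4:ℕ) = 2 + 2 from rfl, pow_add, pow_two]
      rw [h5]
      exact hr4one
    have h4 : r * r = 1 := by
      calc r * r = s⁻¹ * (s * (r * r) * s⁻¹) * s := by group
      _ = s⁻¹ * 1 * s := by rw [h2, h3]
      _ = 1 := by group
    exact hr2ne h4
  · -- s * r * s⁻¹ = r⁻¹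
    have hsr : s * r * s⁻¹ = r⁻¹ := by
      rw [← hm]
      have h1 : r ^ 3 * r = 1 := by rw [← pow_succ]; exact hr4one
      exact eq_inv_of_mul_eq_one_left h1
    have hconjpow : ∀ n : ℕ, s * r ^ n * s⁻¹ = (r ^ n)⁻¹ := by
      intro n
      calc s * r ^ n * s⁻¹ = (MulAut.conj s) (r ^ n) := by rw [MulAut.conj_apply]
      _ = ((MulAut.conj s) r) ^ n := by rw [map_pow]
      _ = (r⁻¹) ^ n := by rw [MulAut.conj_apply, hsr]
      _ = (r ^ n)⁻¹ := by rw [inv_pow]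
    obtain ⟨m2, hm2lt, hm2⟩ := hreduce _ hss
    have h1 : (r ^ m2)⁻¹ = r ^ m2 := by
      calc (r ^ m2)⁻¹ = s * r ^ m2 * s⁻¹ := (hconjpow m2).symm
      _ = s * (s * s) * s⁻¹ := by rw [hm2]
      _ = s * s := by group
      _ = r ^ m2 := hm2.symm
    have h2 : r ^ (2 * m2) = 1 := by
      rw [two_mul, pow_add]
      nth_rewrite 1 [← h1]
      simp
    have h3 : (4:ℕ) ∣ 2 * m2 := by
      have h := orderOf_dvd_iff_pow_eq_one.2 h2
      rwa [hr4] at h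
    have hm2cases : m2 = 0 ∨ m2 = 2 := by omega
    rcases hm2cases with rfl | rfl
    · -- s * s = 1 : dihedral
      have hs2 : s * s = 1 := by rw [← hm2, pow_zero]
      exact aux_dihedral hQ8 hr4 hs hs2 hsr
    · -- s * s = r * r : quaternion case, impossible
      exfalso
      have hss2 : s * s = r * r := by rw [← hm2, pow_two]
      exact hr2ne (aux_lift_contradiction G hZ hclos (Or.inr ⟨hsr, hss2⟩))
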